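/- arXiv:2401.14395 — 4 statements merged into one kernel-verified Lean document; each statement's English description precedes it below -/
import Mathlib

section
/- Let (Ω,𝓕,P) be a probability space and let Z : Ω → ℝ^m, X : Ω → ℝ^k, ε : Ω → ℝ and η : Ω → ℝ be random variables. Let q : ℝ^m × ℝ^k × ℝ → ℝ be measurable and set D = q(Z,X,η). If Z is conditionally independent of the pair (ε,η) given X (the precise form of the instrument exogeneity used in the proof; the paper's Assumption 3 states Z independent of (ε,η)), then D is conditionally independent of ε given (η,X): for all bounded measurable a : ℝ → ℝ and b : ℝ → ℝ, E[a(D) b(ε) | σ(η,X)] = E[a(D) | σ(η,X)] · E[b(ε) | σ(η,X)] P-almost surely. -/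
/-!
Write `𝒢 = σ(η, X)`. Since `D` is `σ(Z, η, X)`-measurable, the tower property reduces the claim
to `E[b(ε) | σ(Z, η, X)] = E[b(ε) | 𝒢]`, i.e. to the weak-union rule of conditional independence.
From `Z ⫫ (ε, η) | X` one first gets `E[f(Z) | σ(V, X)] = E[f(Z) | σ(X)]` for every `V` that
is a function of `(ε, η)`; with this and the self-adjointness `∫ F E[G | 𝒢] = ∫ E[F | 𝒢] G` of
conditional expectation on bounded functions, the defining integral identity of `E[b(ε) | 𝒢]`
is checked on the π-system of sets `{Z ∈ A} ∩ G`, `G ∈ 𝒢`, which generates `σ(Z, η, X)`.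
-/

open MeasureTheory ProbabilityTheory MeasurableSpace Set

theorem Set.abs_indicator_one_le {β : Type*} (B : Set β) (y : β) :
    |B.indicator (1 : β → ℝ) y| ≤ 1 := by
  by_cases hy : y ∈ B <;> simp [hy]

namespace MeasurableSpace

variable {Ω : Type*}

theorem isPiSystem_image2_inter (m₁ m₂ : MeasurableSpace Ω) :
    IsPiSystem (image2 (· ∩ ·) {s | MeasurableSet[m₁] s} {t | MeasurableSet[m₂] t}) := by
  rintro _ ⟨s₁, hs₁, t₁, ht₁, rfl⟩ _ ⟨s₂, hs₂, t₂, ht₂, rfl⟩ -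
  exact ⟨s₁ ∩ s₂, hs₁.inter hs₂, t₁ ∩ t₂, ht₁.inter ht₂, inter_inter_inter_comm _ _ _ _⟩

theorem generateFrom_image2_inter (m₁ m₂ : MeasurableSpace Ω) :
    generateFrom (image2 (· ∩ ·) {s | MeasurableSet[m₁] s} {t | MeasurableSet[m₂] t}) =
      m₁ ⊔ m₂ := by
  refine le_antisymm (generateFrom_le ?_) (sup_le (fun s hs => ?_) (fun t ht => ?_))
  · rintro _ ⟨s, hs, t, ht, rfl⟩
    exact (le_sup_left (b := m₂) s hs).inter (le_sup_right (a := m₁) t ht)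
  · exact measurableSet_generateFrom ⟨s, hs, univ, MeasurableSet.univ, inter_univ s⟩
  · exact measurableSet_generateFrom ⟨univ, MeasurableSet.univ, t, ht, univ_inter t⟩

end MeasurableSpace

namespace MeasureTheory

variable {Ω E : Type*} {m m' m₁ m₂ : MeasurableSpace Ω} {mΩ : MeasurableSpace Ω} {P : Measure Ω}
  [NormedAddCommGroup E] [NormedSpace ℝ E]

theorem ae_norm_comp_le {α : Type*} {f : α → ℝ} {C : ℝ} (hC : ∀ x, |f x| ≤ C) (Z : Ω → α) :
    ∀ᵐ ω ∂P, ‖f (Z ω)‖ ≤ C :=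
  ae_of_all _ fun ω => (Real.norm_eq_abs _).trans_le (hC (Z ω))

theorem setIntegral_preimage_inter_eq_mul_indicator {β : Type*} [MeasurableSpace β] {W : Ω → β}
    (hW : Measurable W) {B : Set β} (hB : MeasurableSet B) (t : Set Ω) (F : Ω → ℝ) :
    ∫ ω in W ⁻¹' B ∩ t, F ω ∂P = ∫ ω in t, F ω * B.indicator 1 (W ω) ∂P := by
  rw [inter_comm, ← setIntegral_indicator (hW hB)]
  congr 1 with ω
  by_cases hω : W ω ∈ B <;> simp [hω]

theorem setIntegral_eq_of_isPiSystem (hm : m ≤ mΩ) {S : Set (Set Ω)}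
    (hgen : m = generateFrom S) (hS : IsPiSystem S) {f g : Ω → E}
    (hf : Integrable f P) (hg : Integrable g P) (h_univ : ∫ ω, f ω ∂P = ∫ ω, g ω ∂P)
    (h : ∀ s ∈ S, ∫ ω in s, f ω ∂P = ∫ ω in s, g ω ∂P) {s : Set Ω} (hs : MeasurableSet[m] s) :
    ∫ ω in s, f ω ∂P = ∫ ω in s, g ω ∂P := by
  have hS_meas : ∀ t ∈ S, MeasurableSet[m] t := fun t ht => hgen ▸ measurableSet_generateFrom ht
  have hext : (P.withDensityᵥ f).trim hm = (P.withDensityᵥ g).trim hm := by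
    refine VectorMeasure.ext_of_generateFrom S (fun t ht => ?_) hgen hS ?_
    · rw [VectorMeasure.trim_measurableSet_eq hm (hS_meas t ht),
        VectorMeasure.trim_measurableSet_eq hm (hS_meas t ht),
        withDensityᵥ_apply hf (hm _ (hS_meas t ht)), withDensityᵥ_apply hg (hm _ (hS_meas t ht))]
      exact h t ht
    · rw [VectorMeasure.trim_measurableSet_eq hm MeasurableSet.univ,
        VectorMeasure.trim_measurableSet_eq hm MeasurableSet.univ,
        withDensityᵥ_apply hf MeasurableSet.univ, withDensityᵥ_apply hg MeasurableSet.univ,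
        setIntegral_univ, setIntegral_univ, h_univ]
  simpa only [VectorMeasure.trim_measurableSet_eq hm hs, withDensityᵥ_apply hf (hm _ hs),
    withDensityᵥ_apply hg (hm _ hs)] using congrArg (fun v => v s) hext

theorem ae_eq_condExp_sup_of_forall_setIntegral_inter_eq [CompleteSpace E] [IsFiniteMeasure P]
    (hm₁ : m₁ ≤ mΩ) (hm₂ : m₂ ≤ mΩ) {f g : Ω → E}
    (hf : Integrable f P) (hg : Integrable g P) (hg_meas : AEStronglyMeasurable[m₁ ⊔ m₂] g P)
    (h : ∀ s t, MeasurableSet[m₁] s → MeasurableSet[m₂] t →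
      ∫ ω in s ∩ t, g ω ∂P = ∫ ω in s ∩ t, f ω ∂P) :
    g =ᵐ[P] P[f | m₁ ⊔ m₂] := by
  have h_univ : ∫ ω, g ω ∂P = ∫ ω, f ω ∂P := by
    simpa only [inter_univ, setIntegral_univ] using h univ univ .univ .univ
  refine ae_eq_condExp_of_forall_setIntegral_eq (sup_le hm₁ hm₂) hf
    (fun s _ _ => hg.integrableOn) (fun s hs _ => ?_) hg_meas
  refine setIntegral_eq_of_isPiSystem (sup_le hm₁ hm₂) (generateFrom_image2_inter m₁ m₂).symm
    (isPiSystem_image2_inter m₁ m₂) hg hf h_univ ?_ hs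
  rintro _ ⟨s, hs, t, ht, rfl⟩
  exact h s t hs ht

theorem setIntegral_mul_condExp [IsFiniteMeasure P] (hm : m ≤ mΩ)
    {s : Set Ω} (hs : MeasurableSet[m] s) {F G : Ω → ℝ} {C : ℝ} (hF : Integrable F P)
    (hG : StronglyMeasurable[m] G) (hG_bdd : ∀ᵐ ω ∂P, ‖G ω‖ ≤ C) :
    ∫ ω in s, G ω * (P[F | m]) ω ∂P = ∫ ω in s, G ω * F ω ∂P := by
  rw [← setIntegral_condExp hm (hF.bdd_mul (hG.mono hm).aestronglyMeasurable hG_bdd) hs]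
  refine setIntegral_congr_ae (hm s hs) ?_
  filter_upwards [condExp_stronglyMeasurable_mul_of_bound hm hG hF C hG_bdd] with ω hω _
  exact hω.symm

theorem setIntegral_condExp_mul_eq_mul_condExp [IsFiniteMeasure P]
    (hm : m ≤ mΩ) {s : Set Ω} (hs : MeasurableSet[m] s) {F G : Ω → ℝ} {C D : ℝ}
    (hF : Integrable F P) (hF_bdd : ∀ᵐ ω ∂P, ‖F ω‖ ≤ C)
    (hG : Integrable G P) (hG_bdd : ∀ᵐ ω ∂P, ‖G ω‖ ≤ D) :
    ∫ ω in s, (P[F | m]) ω * G ω ∂P = ∫ ω in s, F ω * (P[G | m]) ω ∂P := by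
  calc ∫ ω in s, (P[F | m]) ω * G ω ∂P
      = ∫ ω in s, (P[F | m]) ω * (P[G | m]) ω ∂P :=
        (setIntegral_mul_condExp hm hs hG stronglyMeasurable_condExp
          (ae_bdd_norm_condExp_of_ae_bdd_norm hF_bdd)).symm
    _ = ∫ ω in s, (P[G | m]) ω * (P[F | m]) ω ∂P := by simp only [mul_comm]
    _ = ∫ ω in s, (P[G | m]) ω * F ω ∂P :=
        setIntegral_mul_condExp hm hs hF stronglyMeasurable_condExp
          (ae_bdd_norm_condExp_of_ae_bdd_norm hG_bdd)
    _ = ∫ ω in s, F ω * (P[G | m]) ω ∂P := by simp only [mul_comm]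

theorem condExp_mul_eq_mul_condExp_of_condExp_eq [IsFiniteMeasure P]
    (hmm' : m ≤ m') (hm' : m' ≤ mΩ) {f g : Ω → ℝ} {C : ℝ} (hf : StronglyMeasurable[m'] f)
    (hf_bdd : ∀ᵐ ω ∂P, ‖f ω‖ ≤ C) (hg : Integrable g P) (hg_eq : P[g | m'] =ᵐ[P] P[g | m]) :
    P[f * g | m] =ᵐ[P] P[f | m] * P[g | m] :=
  calc P[f * g | m]
      =ᵐ[P] P[P[f * g | m'] | m] := (condExp_condExp_of_le hmm' hm').symm
    _ =ᵐ[P] P[f * P[g | m'] | m] :=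
        condExp_congr_ae (condExp_stronglyMeasurable_mul_of_bound hm' hf hg C hf_bdd)
    _ =ᵐ[P] P[f * P[g | m] | m] := condExp_congr_ae (Filter.EventuallyEq.rfl.mul hg_eq)
    _ =ᵐ[P] P[f | m] * P[g | m] :=
        condExp_mul_of_stronglyMeasurable_right stronglyMeasurable_condExp
          (integrable_condExp.bdd_mul (hf.mono hm').aestronglyMeasurable hf_bdd)
          (.of_bound (hf.mono hm').aestronglyMeasurable C hf_bdd)

end MeasureTheory

namespace ProbabilityTheory

variable {Ω α β : Type*} [mα : MeasurableSpace α] [mβ : MeasurableSpace β]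

/-- Conditional independence in product form, tested on bounded measurable functions; unlike
`ProbabilityTheory.CondIndepFun` it needs no standard Borel structure on `Ω`. -/
def BddCondIndepFun (m : MeasurableSpace Ω) {mΩ : MeasurableSpace Ω} (Z : Ω → α) (W : Ω → β)
    (P : Measure Ω) : Prop :=
  ∀ (f : α → ℝ) (g : β → ℝ), Measurable f → Measurable g →
    (∃ C, ∀ x, |f x| ≤ C) → (∃ C, ∀ y, |g y| ≤ C) →
    P[fun ω => f (Z ω) * g (W ω) | m] =ᵐ[P]
      fun ω => (P[fun ω' => f (Z ω') | m]) ω * (P[fun ω' => g (W ω') | m]) ω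

namespace BddCondIndepFun

variable {m n : MeasurableSpace Ω} {mΩ : MeasurableSpace Ω} {P : Measure Ω} [IsFiniteMeasure P]
  {Z : Ω → α} {W : Ω → β}

theorem condExp_comp_left_sup_eq (h : BddCondIndepFun m Z W P) (hm : m ≤ mΩ)
    (hZ : Measurable Z) (hW : Measurable W) (hn : n ≤ mβ.comap W) {f : α → ℝ}
    (hf : Measurable f) (hf_bdd : ∃ C, ∀ x, |f x| ≤ C) :
    P[fun ω => f (Z ω) | n ⊔ m] =ᵐ[P] P[fun ω => f (Z ω) | m] := by
  obtain ⟨C, hC⟩ := hf_bdd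
  have hfZ : Integrable (fun ω => f (Z ω)) P :=
    .of_bound (hf.comp hZ).aestronglyMeasurable C (ae_norm_comp_le hC Z)
  have hk : StronglyMeasurable[n ⊔ m] (P[fun ω => f (Z ω) | m]) :=
    stronglyMeasurable_condExp.mono le_sup_right
  refine (ae_eq_condExp_sup_of_forall_setIntegral_inter_eq (hn.trans hW.comap_le) hm hfZ
    integrable_condExp hk.aestronglyMeasurable ?_).symm
  intro s t hs ht
  obtain ⟨B, hB, rfl⟩ := hn s hs
  have hB1 : Integrable (fun ω => B.indicator (1 : β → ℝ) (W ω)) P :=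
    .of_bound ((measurable_const.indicator hB).comp hW).aestronglyMeasurable 1
      (ae_norm_comp_le (abs_indicator_one_le B) W)
  calc ∫ ω in W ⁻¹' B ∩ t, (P[fun ω => f (Z ω) | m]) ω ∂P
      = ∫ ω in t, (P[fun ω => f (Z ω) | m]) ω * B.indicator 1 (W ω) ∂P :=
        setIntegral_preimage_inter_eq_mul_indicator hW hB t _
    _ = ∫ ω in t,
          (P[fun ω => f (Z ω) | m]) ω * (P[fun ω => B.indicator 1 (W ω) | m]) ω ∂P :=
        (setIntegral_mul_condExp hm ht hB1 stronglyMeasurable_condExp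
          (ae_bdd_norm_condExp_of_ae_bdd_norm (ae_norm_comp_le hC Z))).symm
    _ = ∫ ω in t, (P[fun ω => f (Z ω) * B.indicator 1 (W ω) | m]) ω ∂P := by
        refine setIntegral_congr_ae (hm t ht) ?_
        filter_upwards [h f _ hf (measurable_const.indicator hB) ⟨C, hC⟩
          ⟨1, abs_indicator_one_le B⟩] with ω hω _
        exact hω.symm
    _ = ∫ ω in t, f (Z ω) * B.indicator 1 (W ω) ∂P :=
        setIntegral_condExp hm (hB1.bdd_mul (hf.comp hZ).aestronglyMeasurable
          (ae_norm_comp_le hC Z)) ht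
    _ = ∫ ω in W ⁻¹' B ∩ t, f (Z ω) ∂P :=
        (setIntegral_preimage_inter_eq_mul_indicator hW hB t _).symm

theorem condExp_comp_right_sup_eq (h : BddCondIndepFun m Z W P) (hm : m ≤ mΩ)
    (hZ : Measurable Z) (hW : Measurable W) (hn : n ≤ mβ.comap W) {g : β → ℝ}
    (hg : Measurable g) (hg_bdd : ∃ C, ∀ y, |g y| ≤ C) :
    P[fun ω => g (W ω) | mα.comap Z ⊔ (n ⊔ m)] =ᵐ[P] P[fun ω => g (W ω) | n ⊔ m] := by
  obtain ⟨C, hC⟩ := hg_bdd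
  have hnm : n ⊔ m ≤ mΩ := sup_le (hn.trans hW.comap_le) hm
  have hgW : Integrable (fun ω => g (W ω)) P :=
    .of_bound (hg.comp hW).aestronglyMeasurable C (ae_norm_comp_le hC W)
  have hk : StronglyMeasurable[mα.comap Z ⊔ (n ⊔ m)] (P[fun ω => g (W ω) | n ⊔ m]) :=
    stronglyMeasurable_condExp.mono le_sup_right
  refine (ae_eq_condExp_sup_of_forall_setIntegral_inter_eq hZ.comap_le hnm hgW integrable_condExp
    hk.aestronglyMeasurable ?_).symm
  intro s t hs ht
  obtain ⟨A, hA, rfl⟩ := hs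
  have hA1 : Integrable (fun ω => A.indicator (1 : α → ℝ) (Z ω)) P :=
    .of_bound ((measurable_const.indicator hA).comp hZ).aestronglyMeasurable 1
      (ae_norm_comp_le (abs_indicator_one_le A) Z)
  have hA1_eq : ∀ n' ≤ mβ.comap W, P[fun ω => A.indicator 1 (Z ω) | n' ⊔ m] =ᵐ[P]
      P[fun ω => A.indicator 1 (Z ω) | m] := fun n' hn' =>
    h.condExp_comp_left_sup_eq hm hZ hW hn' (measurable_const.indicator hA)
      ⟨1, abs_indicator_one_le A⟩
  calc ∫ ω in Z ⁻¹' A ∩ t, (P[fun ω => g (W ω) | n ⊔ m]) ω ∂P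
      = ∫ ω in t, (P[fun ω => g (W ω) | n ⊔ m]) ω * A.indicator 1 (Z ω) ∂P :=
        setIntegral_preimage_inter_eq_mul_indicator hZ hA t _
    _ = ∫ ω in t, g (W ω) * (P[fun ω => A.indicator 1 (Z ω) | n ⊔ m]) ω ∂P :=
        setIntegral_condExp_mul_eq_mul_condExp hnm ht hgW (ae_norm_comp_le hC W) hA1
          (ae_norm_comp_le (abs_indicator_one_le A) Z)
    _ = ∫ ω in t, g (W ω) * (P[fun ω => A.indicator 1 (Z ω) | mβ.comap W ⊔ m]) ω ∂P := by
        refine setIntegral_congr_ae (hnm t ht) ?_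
        filter_upwards [hA1_eq n hn, hA1_eq _ le_rfl] with ω h₁ h₂ _
        rw [h₁, h₂]
    _ = ∫ ω in t, g (W ω) * A.indicator 1 (Z ω) ∂P :=
        setIntegral_mul_condExp (sup_le hW.comap_le hm) (sup_le_sup_right hn m t ht) hA1
          ((hg.comp (comap_measurable W)).stronglyMeasurable.mono le_sup_left)
          (ae_norm_comp_le hC W)
    _ = ∫ ω in Z ⁻¹' A ∩ t, g (W ω) ∂P :=
        (setIntegral_preimage_inter_eq_mul_indicator hZ hA t _).symm

end BddCondIndepFun

end ProbabilityTheory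

/-- **Theorem 2(i).** In the triangular model `D = q(Z,X,η)`, if the instrument `Z` is
conditionally independent of the pair of errors `(ε,η)` given the controls `X`, then the
treatment `D` is conditionally independent of `ε` given `(η,X)`: for all bounded measurable
`a, b : ℝ → ℝ`, `E[a(D) b(ε) | σ(η,X)] = E[a(D) | σ(η,X)] ⬝ E[b(ε) | σ(η,X)]` a.s. -/
theorem triangular_condIndep_treatment_error
    {Ω : Type*} {mΩ : MeasurableSpace Ω} (P : Measure Ω) [IsProbabilityMeasure P]
    {m k : ℕ}
    (Z : Ω → (Fin m → ℝ)) (X : Ω → (Fin k → ℝ)) (ε η : Ω → ℝ)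
    (hZ : Measurable Z) (hX : Measurable X) (hε : Measurable ε) (hη : Measurable η)
    (q : (Fin m → ℝ) → (Fin k → ℝ) → ℝ → ℝ)
    (hq : Measurable fun p : (Fin m → ℝ) × (Fin k → ℝ) × ℝ => q p.1 p.2.1 p.2.2)
    (D : Ω → ℝ) (hD : ∀ ω, D ω = q (Z ω) (X ω) (η ω))
    -- instrument exogeneity: `Z ⫫ (ε,η) | X`
    (hexog : ∀ (f : (Fin m → ℝ) → ℝ) (g : ℝ × ℝ → ℝ), Measurable f → Measurable g →
      (∃ C, ∀ x, |f x| ≤ C) → (∃ C, ∀ x, |g x| ≤ C) →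
      P[fun ω => f (Z ω) * g (ε ω, η ω) | MeasurableSpace.comap X inferInstance]
        =ᵐ[P] fun ω => (P[fun ω' => f (Z ω') | MeasurableSpace.comap X inferInstance]) ω *
          (P[fun ω' => g (ε ω', η ω') | MeasurableSpace.comap X inferInstance]) ω) :
    -- conclusion: `D ⫫ ε | (η,X)`
    ∀ (a b : ℝ → ℝ), Measurable a → Measurable b →
      (∃ C, ∀ x, |a x| ≤ C) → (∃ C, ∀ x, |b x| ≤ C) →
      P[fun ω => a (D ω) * b (ε ω) |
          MeasurableSpace.comap (fun ω => (η ω, X ω)) inferInstance]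
        =ᵐ[P] fun ω =>
          (P[fun ω' => a (D ω') |
              MeasurableSpace.comap (fun ω => (η ω, X ω)) inferInstance]) ω *
          (P[fun ω' => b (ε ω') |
              MeasurableSpace.comap (fun ω => (η ω, X ω)) inferInstance]) ω := by
  rintro a b ha hb ⟨Ca, hCa⟩ ⟨Cb, hCb⟩
  have hindep : BddCondIndepFun (MeasurableSpace.comap X inferInstance) Z
      (fun ω => (ε ω, η ω)) P := hexog
  have hηX : MeasurableSpace.comap (fun ω => (η ω, X ω)) inferInstance =
      MeasurableSpace.comap η inferInstance ⊔ MeasurableSpace.comap X inferInstance :=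
    MeasurableSpace.comap_prodMk η X
  have hη_le : MeasurableSpace.comap η inferInstance ≤
      MeasurableSpace.comap (fun ω => (ε ω, η ω)) inferInstance :=
    (comap_measurable (fun ω => (ε ω, η ω))).snd.comap_le
  have haD : StronglyMeasurable[MeasurableSpace.comap Z inferInstance ⊔
      (MeasurableSpace.comap η inferInstance ⊔ MeasurableSpace.comap X inferInstance)]
      (fun ω => a (D ω)) := by
    rw [← hηX, ← MeasurableSpace.comap_prodMk]
    simp only [hD]
    exact ((ha.comp (hq.comp (measurable_fst.prodMk (measurable_snd.snd.prodMk
      measurable_snd.fst)))).comp (comap_measurable _)).stronglyMeasurable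
  have hb_eq := hindep.condExp_comp_right_sup_eq hX.comap_le hZ (hε.prodMk hη) hη_le
    (g := fun p => b p.1) (hb.comp measurable_fst) ⟨Cb, fun p => hCb p.1⟩
  rw [hηX]
  exact condExp_mul_eq_mul_condExp_of_condExp_eq le_sup_right
    (sup_le hZ.comap_le (sup_le hη.comap_le hX.comap_le)) haD (ae_norm_comp_le hCa D)
    (.of_bound (hb.comp hε).aestronglyMeasurable Cb (ae_norm_comp_le hCb ε)) hb_eq
end

section
/- Let (Ω,𝓕,P) be a probability space and let Z : Ω → ℝ^m, X : Ω → ℝ^k and η : Ω → ℝ be random variables with η independent of the pair (Z,X). Let q : ℝ^m × ℝ^k × ℝ → ℝ be measurable such that for each fixed (z,x), e ↦ q(z,x,e) is continuous and strictly increasing, with inverse q^{-1}(z,x,·) on its range, and set D = q(Z,X,η). Assume η is continuously distributed with cumulative distribution function F_η that is continuous and strictly increasing on the support of η. Then for law-of-(Z,X)-almost every (z,x) and every d in the range of q(z,x,·), the conditional CDF of D given (Z,X) = (z,x) satisfies F_{D|Z=z,X=x}(d) = F_η(q^{-1}(z,x,d)); consequently the control variable V := F_{D|Z,X}(D) satisfies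 V = F_η(η) P-almost surely. -/
/-! By independence, the joint law of `((Z, X), D)` is the law of `(Z, X)` composed with the
kernel `w ↦ law(η).map (q w.1 w.2 ·)`; uniqueness of disintegrations identifies `condDistrib`
with this kernel almost everywhere. Strict monotonicity of `q w.1 w.2` turns the event
`{q w.1 w.2 η ≤ q w.1 w.2 e}` into `{η ≤ e}`. -/

open MeasureTheory ProbabilityTheory

def measureSupport {α : Type*} [TopologicalSpace α] [MeasurableSpace α]
    (μ : Measure α) : Set α :=
  {x | ∀ U ∈ nhds x, μ U ≠ 0}

namespace ProbabilityTheory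

variable {Ω β γ δ : Type*} {mΩ : MeasurableSpace Ω} {mβ : MeasurableSpace β}
  {mγ : MeasurableSpace γ} {mδ : MeasurableSpace δ}
  {P : Measure Ω} [IsFiniteMeasure P] {W : Ω → β} {η : Ω → γ} {f : β × γ → δ}

lemma IndepFun.map_prod_comp_eq_compProd (hW : Measurable W) (hη : Measurable η)
    (hind : IndepFun η W P) (hf : Measurable f) :
    P.map (fun ω => (W ω, f (W ω, η ω)))
      = P.map W ⊗ₘ (Kernel.id ×ₖ Kernel.const β (P.map η)).map f := by
  have hg : Measurable fun p : β × γ => (p.1, f p) := measurable_fst.prodMk hf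
  have hlaw : P.map (fun ω => (W ω, η ω)) = (P.map W).prod (P.map η) :=
    (indepFun_iff_map_prod_eq_prod_map_map hW.aemeasurable hη.aemeasurable).mp hind.symm
  have hcomp : P.map (fun ω => (W ω, f (W ω, η ω)))
      = (P.map fun ω => (W ω, η ω)).map (fun p => (p.1, f p)) :=
    (Measure.map_map hg (hW.prodMk hη)).symm
  ext s hs
  rw [hcomp, hlaw, Measure.map_apply hg hs,
    Measure.prod_apply (hg hs), Measure.compProd_apply hs]
  refine lintegral_congr fun w => ?_
  rw [Kernel.map_apply _ hf, Kernel.prod_apply, Kernel.id_apply, Kernel.const_apply,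
    Measure.dirac_prod, Measure.map_map hf measurable_prodMk_left,
    Measure.map_apply (hf.comp measurable_prodMk_left) (measurable_prodMk_left hs)]
  rfl

lemma IndepFun.condDistrib_comp_ae_eq [StandardBorelSpace δ] [Nonempty δ]
    (hW : Measurable W) (hη : Measurable η) (hind : IndepFun η W P) (hf : Measurable f) :
    ∀ᵐ w ∂P.map W, condDistrib (fun ω => f (W ω, η ω)) W P w
      = (P.map η).map (fun e => f (w, e)) := by
  filter_upwards [condDistrib_ae_eq_of_measure_eq_compProd_of_measurable
    (Y := fun ω => f (W ω, η ω)) hW (hf.comp (hW.prodMk hη))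
    (hind.map_prod_comp_eq_compProd hW hη hf)] with w hw
  rw [hw, Kernel.map_apply _ hf, Kernel.prod_apply, Kernel.id_apply, Kernel.const_apply,
    Measure.dirac_prod, Measure.map_map hf measurable_prodMk_left]
  rfl

end ProbabilityTheory

lemma MeasureTheory.Measure.map_apply_Iic_of_strictMono {α β : Type*} [LinearOrder α]
    [TopologicalSpace α] [OrderTopology α] [SecondCountableTopology α] [MeasurableSpace α]
    [BorelSpace α] [LinearOrder β] [TopologicalSpace β] [OrderClosedTopology β]
    [MeasurableSpace β] [BorelSpace β]
    (μ : Measure β) {g : β → α} (hg : StrictMono g) (a : β) :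
    μ.map g (Set.Iic (g a)) = μ (Set.Iic a) := by
  rw [Measure.map_apply hg.monotone.measurable measurableSet_Iic]
  exact congrArg μ (Set.ext fun _ => hg.le_iff_le)

theorem conditional_cdf_control_variable_general
    {Ω : Type*} {mΩ : MeasurableSpace Ω} (P : Measure Ω) [IsProbabilityMeasure P]
    {m k : ℕ}
    (Z : Ω → (Fin m → ℝ)) (X : Ω → (Fin k → ℝ)) (η : Ω → ℝ)
    (hZ : Measurable Z) (hX : Measurable X) (hη : Measurable η)
    (hindep : IndepFun η (fun ω => (Z ω, X ω)) P)
    (q : (Fin m → ℝ) → (Fin k → ℝ) → ℝ → ℝ)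
    (hq : Measurable fun p : (Fin m → ℝ) × (Fin k → ℝ) × ℝ => q p.1 p.2.1 p.2.2)
    (hqmono : ∀ z x, StrictMono (q z x))
    (qinv : (Fin m → ℝ) → (Fin k → ℝ) → ℝ → ℝ)
    (hqinv : ∀ z x e, qinv z x (q z x e) = e)
    (D : Ω → ℝ) (hD : ∀ ω, D ω = q (Z ω) (X ω) (η ω))
    (Fη : ℝ → ℝ) (hFη : ∀ e, Fη e = (P.map η (Set.Iic e)).toReal) :
    (∀ᵐ p ∂(P.map fun ω => (Z ω, X ω)), ∀ d ∈ Set.range (q p.1 p.2),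
      condDistrib D (fun ω => (Z ω, X ω)) P p (Set.Iic d)
        = ENNReal.ofReal (Fη (qinv p.1 p.2 d))) ∧
    (∀ᵐ ω ∂P,
      (condDistrib D (fun ω' => (Z ω', X ω')) P (Z ω, X ω) (Set.Iic (D ω))).toReal
        = Fη (η ω)) := by
  have hW : Measurable fun ω => (Z ω, X ω) := hZ.prodMk hX
  have hcdf : ∀ᵐ p ∂(P.map fun ω => (Z ω, X ω)), ∀ e,
      condDistrib D (fun ω => (Z ω, X ω)) P p (Set.Iic (q p.1 p.2 e))
        = P.map η (Set.Iic e) := by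
    have hq' :
        Measurable fun p : ((Fin m → ℝ) × (Fin k → ℝ)) × ℝ => q p.1.1 p.1.2 p.2 :=
      hq.comp (measurable_fst.fst.prodMk (measurable_fst.snd.prodMk measurable_snd))
    filter_upwards [hindep.condDistrib_comp_ae_eq hW hη hq'] with p hp e
    rw [funext hD, hp, Measure.map_apply_Iic_of_strictMono _ (hqmono p.1 p.2)]
  refine ⟨?_, ?_⟩
  · filter_upwards [hcdf] with p hp
    rintro d ⟨e, rfl⟩
    rw [hp, hqinv, hFη, ENNReal.ofReal_toReal (measure_ne_top _ _)]
  · filter_upwards [ae_of_ae_map hW.aemeasurable hcdf] with ω hω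
    rw [hD ω, hω, hFη]

/-- **Control-variable construction of Theorem 2(ii)** (following Imbens–Newey).  In the
triangular model `D = q(Z,X,η)` with `e ↦ q(z,x,e)` continuous and strictly increasing,
`η ⫫ (Z,X)` and `η` continuously distributed with CDF `Fη` continuous and strictly increasing
on its support, the conditional CDF of `D` given `(Z,X) = (z,x)` satisfies
`F_{D|Z=z,X=x}(d) = Fη(q⁻¹(z,x,d))` for a.e. `(z,x)` and all `d` in the range of `q(z,x,·)`;
consequently `V := F_{D|Z,X}(D) = Fη(η)` `P`-almost surely. -/
theorem conditional_cdf_control_variable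
    {Ω : Type*} {mΩ : MeasurableSpace Ω} (P : Measure Ω) [IsProbabilityMeasure P]
    {m k : ℕ}
    (Z : Ω → (Fin m → ℝ)) (X : Ω → (Fin k → ℝ)) (η : Ω → ℝ)
    (hZ : Measurable Z) (hX : Measurable X) (hη : Measurable η)
    (hindep : IndepFun η (fun ω => (Z ω, X ω)) P)
    (q : (Fin m → ℝ) → (Fin k → ℝ) → ℝ → ℝ)
    (hq : Measurable fun p : (Fin m → ℝ) × (Fin k → ℝ) × ℝ => q p.1 p.2.1 p.2.2)
    (hqcont : ∀ z x, Continuous (q z x)) (hqmono : ∀ z x, StrictMono (q z x))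
    (qinv : (Fin m → ℝ) → (Fin k → ℝ) → ℝ → ℝ)
    (hqinv : ∀ z x e, qinv z x (q z x e) = e)
    (D : Ω → ℝ) (hD : ∀ ω, D ω = q (Z ω) (X ω) (η ω))
    (hηcont : P.map η ≪ MeasureTheory.volume)
    (Fη : ℝ → ℝ) (hFη : ∀ e, Fη e = (P.map η (Set.Iic e)).toReal)
    (hFηcont : Continuous Fη)
    (hFηmono : StrictMonoOn Fη (measureSupport (P.map η))) :
    (∀ᵐ p ∂(P.map fun ω => (Z ω, X ω)), ∀ d ∈ Set.range (q p.1 p.2),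
      condDistrib D (fun ω => (Z ω, X ω)) P p (Set.Iic d)
        = ENNReal.ofReal (Fη (qinv p.1 p.2 d))) ∧
    (∀ᵐ ω ∂P,
      (condDistrib D (fun ω' => (Z ω', X ω')) P (Z ω, X ω) (Set.Iic (D ω))).toReal
        = Fη (η ω)) :=
  conditional_cdf_control_variable_general (mΩ := mΩ) P Z X η hZ hX hη hindep q hq hqmono qinv hqinv
    D hD Fη hFη
end

section
/- Let (Ω,𝓕,P) be a probability space and let D : Ω → ℝ and X : Ω → ℝ^k be measurably separated random variables. Let Y = f(D) + h(X) + ε be integrable, where f : ℝ → ℝ and h : ℝ^k → ℝ are measurable, and assume the conditional mean independence condition E[ε | σ(D,X)] = E[ε | σ(X)] P-almost surely. Then f is identified from the regression function up to an additive constant: for any measurable functions f̃ : ℝ → ℝ and H̃ : ℝ^k → ℝ with E[Y | σ(D,X)] = f̃(D) + H̃(X) P-almost surely, the difference f(D) − f̃(D) is P-almost surely equal to a constant. -/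
/-!
Conditional mean independence makes `E[ε | σ(D,X)]` a measurable function of `X` alone
(Doob–Dynkin), so the regression function `E[Y | σ(D,X)]` is `f(D) + H(X)` for a measurable `H`.
Any other additive version `f̃(D) + H̃(X)` then gives `f(D) - f̃(D) = H̃(X) - H(X)` a.s., and
measurable separation forces this common value to be a.s. constant.
-/

open MeasureTheory ProbabilityTheory

/-- Two random variables `D` and `X` are *measurably separated* (under `P`) if any measurable
function of `D` that is `P`-a.s. equal to a measurable function of `X` is `P`-a.s. constant. -/
def MeasurablySeparated {Ω E F : Type*} [MeasurableSpace Ω] [MeasurableSpace E]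
    [MeasurableSpace F] (P : Measure Ω) (D : Ω → E) (X : Ω → F) : Prop :=
  ∀ (l : E → ℝ) (q : F → ℝ), Measurable l → Measurable q →
    (fun ω => l (D ω)) =ᵐ[P] (fun ω => q (X ω)) →
    ∃ c : ℝ, (fun ω => l (D ω)) =ᵐ[P] fun _ => c

theorem MeasurablySeparated.ae_eq_const_of_add_ae_eq_add
    {Ω E F : Type*} [MeasurableSpace Ω] [MeasurableSpace E] [MeasurableSpace F]
    {P : Measure Ω} {D : Ω → E} {X : Ω → F} (hsep : MeasurablySeparated P D X)
    {a a' : E → ℝ} {b b' : F → ℝ} (ha : Measurable a) (ha' : Measurable a')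
    (hb : Measurable b) (hb' : Measurable b')
    (heq : (fun ω => a (D ω) + b (X ω)) =ᵐ[P] fun ω => a' (D ω) + b' (X ω)) :
    ∃ c : ℝ, (fun ω => a (D ω) - a' (D ω)) =ᵐ[P] fun _ => c := by
  refine hsep (a - a') (b' - b) (ha.sub ha') (hb'.sub hb) ?_
  filter_upwards [heq] with ω hω
  simp only [Pi.sub_apply]
  linarith

theorem exists_measurable_condExp_comap_eq_comp {Ω F : Type*} {mΩ : MeasurableSpace Ω}
    [MeasurableSpace F] (P : Measure Ω) (X : Ω → F) (ε : Ω → ℝ) :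
    ∃ g : F → ℝ, Measurable g ∧ P[ε | MeasurableSpace.comap X inferInstance] = g ∘ X :=
  stronglyMeasurable_condExp.measurable.exists_eq_measurable_comp

theorem condExp_add_of_stronglyMeasurable_left {Ω E : Type*} {m mΩ : MeasurableSpace Ω}
    [NormedAddCommGroup E] [NormedSpace ℝ E] [CompleteSpace E]
    {P : Measure Ω} (hm : m ≤ mΩ) [SigmaFinite (P.trim hm)] {W ε : Ω → E}
    (hW : StronglyMeasurable[m] W) (hWint : Integrable W P) (hεint : Integrable ε P) :
    P[W + ε | m] =ᵐ[P] W + P[ε | m] := by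
  simpa only [condExp_of_stronglyMeasurable hm hW hWint] using condExp_add hWint hεint m

theorem exists_condExp_additive_model_eq {Ω E F : Type*} {mΩ : MeasurableSpace Ω}
    [MeasurableSpace E] [MeasurableSpace F] (P : Measure Ω) [IsFiniteMeasure P]
    {D : Ω → E} {X : Ω → F} {ε Y : Ω → ℝ} (hD : Measurable D) (hX : Measurable X)
    {f : E → ℝ} {h : F → ℝ} (hf : Measurable f) (hh : Measurable h)
    (hY : ∀ ω, Y ω = f (D ω) + h (X ω) + ε ω) (hYint : Integrable Y P)
    (hεint : Integrable ε P)
    (hCMI : P[ε | MeasurableSpace.comap (fun ω => (D ω, X ω)) inferInstance]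
      =ᵐ[P] P[ε | MeasurableSpace.comap X inferInstance]) :
    ∃ H : F → ℝ, Measurable H ∧
      P[Y | MeasurableSpace.comap (fun ω => (D ω, X ω)) inferInstance]
        =ᵐ[P] fun ω => f (D ω) + H (X ω) := by
  set m := MeasurableSpace.comap (fun ω => (D ω, X ω)) inferInstance
  have hm : m ≤ mΩ := (hD.prodMk hX).comap_le
  set W : Ω → ℝ := fun ω => f (D ω) + h (X ω)
  have hW : StronglyMeasurable[m] W :=
    (((hf.comp measurable_fst).add (hh.comp measurable_snd)).comp
      (comap_measurable _)).stronglyMeasurable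
  have hYW : Y = W + ε := funext hY
  have hWint : Integrable W P := by
    simpa only [hYW, add_sub_cancel_right] using hYint.sub hεint
  obtain ⟨g, hg, hεX⟩ := exists_measurable_condExp_comap_eq_comp P X ε
  refine ⟨h + g, hh.add hg, ?_⟩
  calc P[Y | m] =ᵐ[P] W + P[ε | m] := by
        rw [hYW]; exact condExp_add_of_stronglyMeasurable_left hm hW hWint hεint
    _ =ᵐ[P] W + g ∘ X := hεX ▸ hCMI.add_left
    _ = fun ω => f (D ω) + (h + g) (X ω) := by
        funext ω; simp only [W, Pi.add_apply, Function.comp_apply]; ring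

theorem additive_model_identification_general
    {Ω : Type*} {mΩ : MeasurableSpace Ω} (P : Measure Ω) [IsProbabilityMeasure P]
    {k : ℕ}
    (D : Ω → ℝ) (X : Ω → (Fin k → ℝ)) (ε : Ω → ℝ)
    (hD : Measurable D) (hX : Measurable X)
    (hsep : MeasurablySeparated P D X)
    (f : ℝ → ℝ) (h : (Fin k → ℝ) → ℝ) (hf : Measurable f) (hh : Measurable h)
    (Y : Ω → ℝ) (hY : ∀ ω, Y ω = f (D ω) + h (X ω) + ε ω)
    (hYint : Integrable Y P) (hεint : Integrable ε P)
    (hCMI : P[ε | MeasurableSpace.comap (fun ω => (D ω, X ω)) inferInstance]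
      =ᵐ[P] P[ε | MeasurableSpace.comap X inferInstance]) :
    ∀ (ftil : ℝ → ℝ) (Htil : (Fin k → ℝ) → ℝ), Measurable ftil → Measurable Htil →
      (P[Y | MeasurableSpace.comap (fun ω => (D ω, X ω)) inferInstance]
        =ᵐ[P] fun ω => ftil (D ω) + Htil (X ω)) →
      ∃ c : ℝ, (fun ω => f (D ω) - ftil (D ω)) =ᵐ[P] fun _ => c := by
  intro ftil Htil hftil hHtil hreg
  obtain ⟨H, hH, hYreg⟩ :=
    exists_condExp_additive_model_eq P hD hX hf hh hY hYint hεint hCMI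
  exact hsep.ae_eq_const_of_add_ae_eq_add hf hftil hH hHtil (hYreg.symm.trans hreg)

/-- **Example 1.1 (nonparametric additive model).** In `Y = f(D) + h(X) + ε` with
`E[ε | σ(D,X)] = E[ε | σ(X)]` a.s. and `D`, `X` measurably separated, the treatment component
`f` is identified from the regression function up to an additive constant: any additively
separable version `f̃(D) + H̃(X)` of `E[Y | σ(D,X)]` has `f(D) − f̃(D)` a.s. constant. -/
theorem additive_model_identification
    {Ω : Type*} {mΩ : MeasurableSpace Ω} (P : Measure Ω) [IsProbabilityMeasure P]
    {k : ℕ}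
    (D : Ω → ℝ) (X : Ω → (Fin k → ℝ)) (ε : Ω → ℝ)
    (hD : Measurable D) (hX : Measurable X) (hε : Measurable ε)
    (hsep : MeasurablySeparated P D X)
    (f : ℝ → ℝ) (h : (Fin k → ℝ) → ℝ) (hf : Measurable f) (hh : Measurable h)
    (Y : Ω → ℝ) (hY : ∀ ω, Y ω = f (D ω) + h (X ω) + ε ω)
    (hYint : Integrable Y P) (hεint : Integrable ε P)
    (hCMI : P[ε | MeasurableSpace.comap (fun ω => (D ω, X ω)) inferInstance]
      =ᵐ[P] P[ε | MeasurableSpace.comap X inferInstance]) :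
    ∀ (ftil : ℝ → ℝ) (Htil : (Fin k → ℝ) → ℝ), Measurable ftil → Measurable Htil →
      (P[Y | MeasurableSpace.comap (fun ω => (D ω, X ω)) inferInstance]
        =ᵐ[P] fun ω => ftil (D ω) + Htil (X ω)) →
      ∃ c : ℝ, (fun ω => f (D ω) - ftil (D ω)) =ᵐ[P] fun _ => c :=
  additive_model_identification_general (mΩ := mΩ) P D X ε hD hX hsep f h hf hh Y hY hYint hεint
    hCMI
end

section
/- Let (Ω,𝓕,P) be a probability space and let D, X, ε, η, Z be random variables with values in standard Borel spaces such that D = q(Z,X,η) for a measurable q with e ↦ q(z,x,e) strictly increasing and continuous for each (z,x), η is continuously distributed with CDF F_η continuous and strictly increasing on the support of η, η is independent of (Z,X), and Z is conditionally independent of (ε,η) given X. Set V := F_{D|Z,X}(D). Then V = F_η(η) P-almost surely and D is conditionally independent of ε given (X,V): for all bounded measurable a, b : ℝ → ℝ, E[a(D) b(ε) | σ(X,V)] = E[a(D) | σ(X,V)] · E[b(ε) | σ(X,V)] P-almost surely. -/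
open MeasureTheory ProbabilityTheory

theorem measureSupport_eq_support {α : Type*} [TopologicalSpace α] [MeasurableSpace α]
    (μ : Measure α) : measureSupport μ = μ.support := by
  ext x
  simp [measureSupport, Measure.mem_support_iff_forall, pos_iff_ne_zero]

theorem MeasurableSet.exists_measurable_leftInvOn {α β : Type*} [MeasurableSpace α]
    [StandardBorelSpace α] [Nonempty α] [MeasurableSpace β]
    [MeasurableSpace.CountablySeparated β] {s : Set α} (hs : MeasurableSet s) {f : α → β}
    (hf : Measurable f) (hinj : s.InjOn f) :
    ∃ g : β → α, Measurable g ∧ s.LeftInvOn g f := by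
  have : StandardBorelSpace s := hs.standardBorel
  have hemb : MeasurableEmbedding (s.domRestrict f) :=
    (hf.comp measurable_subtype_coe).measurableEmbedding (Set.injOn_iff_injective.1 hinj)
  refine ⟨Function.extend (s.domRestrict f) Subtype.val fun _ => Classical.arbitrary α,
    hemb.measurable_extend measurable_subtype_coe measurable_const, fun x hx => ?_⟩
  exact hemb.injective.extend_apply _ _ ⟨x, hx⟩

theorem ProbabilityTheory.Kernel.measurable_apply_Iic {α : Type*} [MeasurableSpace α]
    (κ : Kernel α ℝ) [IsSFiniteKernel κ] : Measurable fun p : α × ℝ => κ p.1 (Set.Iic p.2) :=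
  Kernel.measurable_kernel_prodMk_left (κ := κ.comap Prod.fst measurable_fst)
    (measurableSet_le measurable_snd measurable_fst.snd)

theorem condExp_mul_ae_eq_mul_of_setIntegral_eq {Ω : Type*} {m m0 : MeasurableSpace Ω}
    {μ : Measure Ω} [IsFiniteMeasure μ] (hm : m ≤ m0) {f g u : Ω → ℝ}
    (hu : StronglyMeasurable[m] u) (hf : Integrable f μ) (hg : Integrable g μ)
    (hu_int : Integrable u μ) (hfg : Integrable (f * g) μ) (hug : Integrable (u * g) μ)
    (hf_eq : ∀ s, MeasurableSet[m] s → ∫ x in s, f x ∂μ = ∫ x in s, u x ∂μ)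
    (hfg_eq : ∀ s, MeasurableSet[m] s → ∫ x in s, f x * g x ∂μ = ∫ x in s, u x * g x ∂μ) :
    μ[f * g | m] =ᵐ[μ] μ[f | m] * μ[g | m] := by
  have hf_cond : u =ᵐ[μ] μ[f | m] :=
    ae_eq_condExp_of_forall_setIntegral_eq hm hf (fun s _ _ => hu_int.integrableOn)
      (fun s hs _ => (hf_eq s hs).symm) hu.aestronglyMeasurable
  have hfg_cond : μ[u * g | m] =ᵐ[μ] μ[f * g | m] :=
    ae_eq_condExp_of_forall_setIntegral_eq hm hfg (fun s _ _ => integrable_condExp.integrableOn)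
      (fun s hs _ => by rw [setIntegral_condExp hm hug hs]; exact (hfg_eq s hs).symm)
      stronglyMeasurable_condExp.aestronglyMeasurable
  calc μ[f * g | m] =ᵐ[μ] μ[u * g | m] := hfg_cond.symm
    _ =ᵐ[μ] u * μ[g | m] := condExp_mul_of_stronglyMeasurable_left hu hug hg
    _ =ᵐ[μ] μ[f | m] * μ[g | m] := hf_cond.mul (by rfl)

section Independent

variable {Ω α γ β : Type*} {mΩ : MeasurableSpace Ω} [MeasurableSpace α] [MeasurableSpace γ]
  [MeasurableSpace β] {P : Measure Ω} [IsFiniteMeasure P] {W : Ω → α}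

theorem ProbabilityTheory.Kernel.map_id_prod_const_apply (ν : Measure γ) [SFinite ν]
    {f : α → γ → β} (hf : Measurable (Function.uncurry f)) (w : α) :
    (Kernel.id ×ₖ Kernel.const α ν).map (Function.uncurry f) w = ν.map (f w) := by
  rw [Kernel.map_apply _ hf, Kernel.prod_apply, Kernel.id_apply, Kernel.const_apply,
    Measure.dirac_prod, Measure.map_map hf measurable_prodMk_left]
  rfl

theorem condDistrib_ae_eq_of_indepFun [StandardBorelSpace β] [Nonempty β] {Y : Ω → γ}
    (hW : Measurable W) (hY : Measurable Y) (hWY : IndepFun W Y P)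
    {f : α → γ → β} (hf : Measurable (Function.uncurry f)) :
    condDistrib (fun ω => f (W ω) (Y ω)) W P
      =ᵐ[P.map W] (Kernel.id ×ₖ Kernel.const α (P.map Y)).map (Function.uncurry f) := by
  refine condDistrib_ae_eq_of_measure_eq_compProd_of_measurable (Y := fun ω => f (W ω) (Y ω))
    hW (hf.comp (hW.prodMk hY)) ?_
  have hF : Measurable fun p : α × γ => (p.1, Function.uncurry f p) := measurable_fst.prodMk hf
  have hmap : P.map (fun ω => (W ω, f (W ω) (Y ω)))
      = (P.map W ⊗ₘ Kernel.const α (P.map Y)).map fun p => (p.1, Function.uncurry f p) := by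
    rw [Measure.compProd_const,
      ← (indepFun_iff_map_prod_eq_prod_map_map hW.aemeasurable hY.aemeasurable).1 hWY,
      Measure.map_map hF (hW.prodMk hY)]
    rfl
  ext s hs
  rw [hmap, Measure.map_apply hF hs, Measure.compProd_apply (hF hs), Measure.compProd_apply hs]
  refine lintegral_congr fun w => ?_
  have hfw : Measurable (f w) := hf.comp measurable_prodMk_left
  rw [Kernel.map_id_prod_const_apply _ hf, Kernel.const_apply,
    Measure.map_apply hfw (measurable_prodMk_left hs)]
  rfl

theorem condDistrib_Iic_ae_eq_of_indepFun_of_strictMono {Y : Ω → ℝ} (hW : Measurable W)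
    (hY : Measurable Y) (hWY : IndepFun W Y P) {f : α → ℝ → ℝ}
    (hf : Measurable (Function.uncurry f)) (hmono : ∀ w, StrictMono (f w)) :
    ∀ᵐ ω ∂P, condDistrib (fun ω => f (W ω) (Y ω)) W P (W ω) (Set.Iic (f (W ω) (Y ω)))
      = P.map Y (Set.Iic (Y ω)) := by
  filter_upwards [ae_of_ae_map hW.aemeasurable (condDistrib_ae_eq_of_indepFun hW hY hWY hf)]
    with ω hω
  have hfw : Measurable (f (W ω)) := hf.comp measurable_prodMk_left
  rw [hω, Kernel.map_id_prod_const_apply _ hf, Measure.map_apply hfw measurableSet_Iic]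
  congr 1
  ext e
  exact (hmono (W ω)).le_iff_le

end Independent

theorem abs_indicator_one_le {ε : Type*} (S : Set ε) (x : ε) : |S.indicator (1 : ε → ℝ) x| ≤ 1 := by
  by_cases hx : x ∈ S <;> simp [hx]

/-- Conditional independence of `Z` and `Y` given `X`, in the form of the exogeneity hypothesis;
unlike `ProbabilityTheory.CondIndepFun` it does not need `Ω` to be standard Borel. -/
def BddCondIndepFun {Ω β γ δ : Type*} {mΩ : MeasurableSpace Ω} [MeasurableSpace β]
    [MeasurableSpace γ] [MeasurableSpace δ] (X : Ω → γ) (Z : Ω → β) (Y : Ω → δ)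
    (P : Measure Ω) : Prop :=
  ∀ (f : β → ℝ) (g : δ → ℝ), Measurable f → Measurable g →
    (∃ C, ∀ x, |f x| ≤ C) → (∃ C, ∀ x, |g x| ≤ C) →
    P[fun ω => f (Z ω) * g (Y ω) | MeasurableSpace.comap X inferInstance]
      =ᵐ[P] fun ω => (P[fun ω' => f (Z ω') | MeasurableSpace.comap X inferInstance]) ω *
        (P[fun ω' => g (Y ω') | MeasurableSpace.comap X inferInstance]) ω

section CondIndep

variable {Ω β γ δ : Type*} {mΩ : MeasurableSpace Ω} [MeasurableSpace β] [StandardBorelSpace β]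
  [Nonempty β] [MeasurableSpace γ] [MeasurableSpace δ]
  {P : Measure Ω} [IsFiniteMeasure P] {Z : Ω → β} {X : Ω → γ} {Y : Ω → δ}

theorem measureReal_inter_preimage_eq_setIntegral_condDistrib
    (hZ : Measurable Z) (hX : Measurable X) (hY : Measurable Y)
    (hZY : BddCondIndepFun X Z Y P)
    {A : Set β} {B : Set γ} {C : Set δ} (hA : MeasurableSet A) (hB : MeasurableSet B)
    (hC : MeasurableSet C) :
    P.real ((X ⁻¹' B ∩ Y ⁻¹' C) ∩ Z ⁻¹' A)
      = ∫ ω in X ⁻¹' B ∩ Y ⁻¹' C, (condDistrib Z X P (X ω)).real A ∂P := by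
  set mX := MeasurableSpace.comap X inferInstance
  have hmX : mX ≤ mΩ := hX.comap_le
  have hBX : MeasurableSet[mX] (X ⁻¹' B) := ⟨B, hB, rfl⟩
  set iA := (Z ⁻¹' A).indicator (1 : Ω → ℝ)
  set iC := (Y ⁻¹' C).indicator (1 : Ω → ℝ)
  set κA := fun ω => (condDistrib Z X P (X ω)).real A
  have hAC := (hZ hA).inter (hY hC)
  have hiC : Integrable iC P := (integrable_const 1).indicator (hY hC)
  have hκA : StronglyMeasurable[mX] κA :=
    (measurable_condDistrib hA).ennreal_toReal.stronglyMeasurable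
  have hκA_le ω : ‖κA ω‖ ≤ 1 := by
    rw [Real.norm_eq_abs, abs_of_nonneg measureReal_nonneg]
    exact measureReal_le_one
  have hprod : P[iA * iC | mX] =ᵐ[P] P[iA | mX] * P[iC | mX] :=
    hZY (A.indicator 1) (C.indicator 1) (measurable_one.indicator hA)
      (measurable_one.indicator hC) ⟨1, abs_indicator_one_le A⟩ ⟨1, abs_indicator_one_le C⟩
  have hiAC : Integrable (iA * iC) P := by
    rw [← Set.inter_indicator_one]
    exact (integrable_const 1).indicator hAC
  have hκAC : Integrable (κA * iC) P :=
    hiC.bdd_mul (hκA.mono hmX).aestronglyMeasurable (ae_of_all _ hκA_le)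
  have hiA : κA =ᵐ[P] P[iA | mX] := condDistrib_ae_eq_condExp hX hZ hA
  have hpull : P[κA * iC | mX] =ᵐ[P] κA * P[iC | mX] :=
    condExp_stronglyMeasurable_mul_of_bound hmX hκA hiC 1 (ae_of_all _ hκA_le)
  calc P.real ((X ⁻¹' B ∩ Y ⁻¹' C) ∩ Z ⁻¹' A)
      = ∫ ω in X ⁻¹' B, (iA * iC) ω ∂P := by
        rw [← Set.inter_indicator_one, integral_indicator_one hAC,
          measureReal_restrict_apply hAC, Set.inter_comm (X ⁻¹' B ∩ Y ⁻¹' C),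
          Set.inter_comm (X ⁻¹' B), Set.inter_assoc]
    _ = ∫ ω in X ⁻¹' B, (P[iA | mX] * P[iC | mX]) ω ∂P := by
        rw [← setIntegral_condExp hmX hiAC hBX]
        exact setIntegral_congr_ae (hmX _ hBX) (hprod.mono fun ω h _ => h)
    _ = ∫ ω in X ⁻¹' B, (κA * iC) ω ∂P := by
        rw [← setIntegral_condExp hmX hκAC hBX]
        exact setIntegral_congr_ae (hmX _ hBX)
          ((hiA.symm.mul (by rfl)).trans hpull.symm |>.mono fun ω h _ => h)
    _ = ∫ ω in X ⁻¹' B ∩ Y ⁻¹' C, κA ω ∂P := by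
        rw [← setIntegral_indicator (hY hC)]
        congr 1 with ω
        by_cases hω : ω ∈ Y ⁻¹' C <;> simp [iC, hω]

theorem map_prod_eq_compProd_condDistrib
    (hZ : Measurable Z) (hX : Measurable X) (hY : Measurable Y)
    (hZY : BddCondIndepFun X Z Y P) :
    P.map (fun ω => ((X ω, Y ω), Z ω))
      = P.map (fun ω => (X ω, Y ω)) ⊗ₘ (condDistrib Z X P).prodMkRight δ := by
  have hXY : Measurable fun ω => (X ω, Y ω) := hX.prodMk hY
  refine Measure.ext_prod₃' fun {B C A} hB hC hA => ?_
  refine (ENNReal.toReal_eq_toReal_iff' (measure_ne_top _ _) (measure_ne_top _ _)).1 ?_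
  have hκ_meas : Measurable fun ω => condDistrib Z X P (X ω) A :=
    (Kernel.measurable_coe _ hA).comp hX
  rw [Measure.map_apply (hXY.prodMk hZ) ((hB.prod hC).prod hA),
    Measure.compProd_apply_prod (hB.prod hC) hA, setLIntegral_map (hB.prod hC)
      (Kernel.measurable_coe _ hA) hXY, ← measureReal_def]
  change P.real ((X ⁻¹' B ∩ Y ⁻¹' C) ∩ Z ⁻¹' A)
    = (∫⁻ ω in X ⁻¹' B ∩ Y ⁻¹' C, condDistrib Z X P (X ω) A ∂P).toReal
  rw [measureReal_inter_preimage_eq_setIntegral_condDistrib hZ hX hY hZY hA hB hC,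
    ← integral_toReal hκ_meas.aemeasurable (ae_of_all _ fun ω => measure_lt_top _ _)]
  rfl

theorem integral_eq_integral_integral_condDistrib
    (hZ : Measurable Z) (hX : Measurable X) (hY : Measurable Y)
    (hZY : BddCondIndepFun X Z Y P)
    {Φ : (γ × δ) × β → ℝ} (hΦ : StronglyMeasurable Φ)
    (hΦ_int : Integrable (fun ω => Φ ((X ω, Y ω), Z ω)) P) :
    ∫ ω, Φ ((X ω, Y ω), Z ω) ∂P = ∫ ω, ∫ z, Φ ((X ω, Y ω), z) ∂(condDistrib Z X P (X ω)) ∂P := by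
  have hXY : Measurable fun ω => (X ω, Y ω) := hX.prodMk hY
  have hlaw := map_prod_eq_compProd_condDistrib hZ hX hY hZY
  have hΦ_int' :
      Integrable Φ ((P.map fun ω => (X ω, Y ω)) ⊗ₘ (condDistrib Z X P).prodMkRight δ) := by
    rw [← hlaw, integrable_map_measure hΦ.aestronglyMeasurable (hXY.prodMk hZ).aemeasurable]
    exact hΦ_int
  calc ∫ ω, Φ ((X ω, Y ω), Z ω) ∂P
      = ∫ p, Φ p ∂(P.map fun ω => ((X ω, Y ω), Z ω)) :=
        (integral_map (hXY.prodMk hZ).aemeasurable hΦ.aestronglyMeasurable).symm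
    _ = ∫ w, ∫ z, Φ (w, z) ∂(condDistrib Z X P).prodMkRight δ w ∂(P.map fun ω => (X ω, Y ω)) := by
        rw [hlaw, Measure.integral_compProd hΦ_int']
    _ = ∫ ω, ∫ z, Φ ((X ω, Y ω), z) ∂(condDistrib Z X P (X ω)) ∂P :=
        integral_map hXY.aemeasurable hΦ.integral_kernel_prod_right'.aestronglyMeasurable

end CondIndep

section ControlFunction

variable {Ω β γ E : Type*} {mΩ : MeasurableSpace Ω} [MeasurableSpace β] [StandardBorelSpace β]
  [Nonempty β] [MeasurableSpace γ] [MeasurableSpace E] {P : Measure Ω} [IsFiniteMeasure P]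
  {Z : Ω → β} {X : Ω → γ} {ε : Ω → E} {η V : Ω → ℝ} {q : β → γ → ℝ → ℝ} {F Q : ℝ → ℝ}
  {a : ℝ → ℝ} {b : E → ℝ}

theorem setIntegral_comp_mul_eq_setIntegral_integral_condDistrib_mul
    (hZ : Measurable Z) (hX : Measurable X) (hε : Measurable ε) (hη : Measurable η)
    (hZY : BddCondIndepFun X Z (fun ω => (ε ω, η ω)) P)
    (hq : Measurable fun p : β × γ × ℝ => q p.1 p.2.1 p.2.2) (hF : Measurable F)
    (hVF : ∀ᵐ ω ∂P, V ω = F (η ω)) (hQV : ∀ᵐ ω ∂P, Q (V ω) = η ω)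
    (ha : Measurable a) (ha_bdd : ∃ C, ∀ x, |a x| ≤ C)
    (hb : Measurable b) (hb_bdd : ∃ C, ∀ x, |b x| ≤ C)
    {B : Set (γ × ℝ)} (hB : MeasurableSet B) :
    ∫ ω in (fun ω => (X ω, V ω)) ⁻¹' B, a (q (Z ω) (X ω) (η ω)) * b (ε ω) ∂P
      = ∫ ω in (fun ω => (X ω, V ω)) ⁻¹' B,
          (∫ z, a (q z (X ω) (Q (V ω))) ∂condDistrib Z X P (X ω)) * b (ε ω) ∂P := by
  obtain ⟨Ca, hCa⟩ := ha_bdd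
  obtain ⟨Cb, hCb⟩ := hb_bdd
  set B₁ : Set (γ × E × ℝ) := (fun w => (w.1, F w.2.2)) ⁻¹' B
  have hB₁ : MeasurableSet B₁ := (measurable_fst.prodMk (hF.comp measurable_snd.snd)) hB
  set φ : (γ × E × ℝ) × β → ℝ := fun p => a (q p.2 p.1.1 p.1.2.2) * b p.1.2.1
  have hφ : Measurable φ :=
    (ha.comp (hq.comp (measurable_snd.prodMk (measurable_fst.fst.prodMk
      measurable_fst.snd.snd)))).mul (hb.comp measurable_fst.snd.fst)
  have hY : Measurable fun ω => (X ω, ε ω, η ω) := hX.prodMk (hε.prodMk hη)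
  have hS : (fun ω => (X ω, V ω)) ⁻¹' B =ᵐ[P] (fun ω => (X ω, ε ω, η ω)) ⁻¹' B₁ := by
    filter_upwards [hVF] with ω hω
    change ((X ω, V ω) ∈ B) = ((X ω, F (η ω)) ∈ B)
    rw [hω]
  have hφ_le p : ‖φ p‖ ≤ Ca * Cb := by
    rw [norm_mul]
    exact mul_le_mul (hCa _) (hCb _) (norm_nonneg _) ((abs_nonneg _).trans (hCa 0))
  have hΦ_int : Integrable (fun ω => (Prod.fst ⁻¹' B₁).indicator φ ((X ω, ε ω, η ω), Z ω)) P :=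
    .of_bound ((hφ.indicator (measurable_fst hB₁)).comp (hY.prodMk hZ)).aestronglyMeasurable
      (Ca * Cb) (ae_of_all _ fun ω => (norm_indicator_le_norm_self _ _).trans (hφ_le _))
  calc ∫ ω in (fun ω => (X ω, V ω)) ⁻¹' B, a (q (Z ω) (X ω) (η ω)) * b (ε ω) ∂P
      = ∫ ω, (Prod.fst ⁻¹' B₁).indicator φ ((X ω, ε ω, η ω), Z ω) ∂P := by
        rw [setIntegral_congr_set hS, ← integral_indicator (hY hB₁)]
        rfl
    _ = ∫ ω, B₁.indicator (fun w => (∫ z, a (q z w.1 w.2.2) ∂condDistrib Z X P w.1) * b w.2.1)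
          (X ω, ε ω, η ω) ∂P := by
        rw [integral_eq_integral_integral_condDistrib hZ hX (hε.prodMk hη) hZY
          (hφ.indicator (measurable_fst hB₁)).stronglyMeasurable hΦ_int]
        refine integral_congr_ae (ae_of_all _ fun ω => ?_)
        by_cases hω : (X ω, ε ω, η ω) ∈ B₁
        · have hmem (z : β) : ((X ω, ε ω, η ω), z) ∈ Prod.fst ⁻¹' B₁ := hω
          simp only [Set.indicator_of_mem hω, Set.indicator_of_mem (hmem _), φ]
          exact integral_mul_const _ _
        · have hmem (z : β) : ((X ω, ε ω, η ω), z) ∉ Prod.fst ⁻¹' B₁ := hω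
          simp only [Set.indicator_of_notMem hω, Set.indicator_of_notMem (hmem _),
            integral_zero]
    _ = ∫ ω in (fun ω => (X ω, ε ω, η ω)) ⁻¹' B₁,
          (∫ z, a (q z (X ω) (Q (V ω))) ∂condDistrib Z X P (X ω)) * b (ε ω) ∂P := by
        rw [← integral_indicator (hY hB₁)]
        refine integral_congr_ae ?_
        filter_upwards [hQV] with ω hω
        by_cases hmem : (X ω, ε ω, η ω) ∈ B₁
        · rw [Set.indicator_of_mem hmem, Set.indicator_of_mem (show ω ∈ _ ⁻¹' B₁ from hmem), hω]
        · rw [Set.indicator_of_notMem hmem,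
            Set.indicator_of_notMem (show ω ∉ _ ⁻¹' B₁ from hmem)]
    _ = _ := (setIntegral_congr_set hS).symm

theorem condExp_mul_ae_eq_mul_given_control
    (hZ : Measurable Z) (hX : Measurable X) (hε : Measurable ε) (hη : Measurable η)
    (hZY : BddCondIndepFun X Z (fun ω => (ε ω, η ω)) P)
    (hq : Measurable fun p : β × γ × ℝ => q p.1 p.2.1 p.2.2) (hV : Measurable V)
    (hF : Measurable F) (hQ : Measurable Q)
    (hVF : ∀ᵐ ω ∂P, V ω = F (η ω)) (hQV : ∀ᵐ ω ∂P, Q (V ω) = η ω)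
    (ha : Measurable a) (ha_bdd : ∃ C, ∀ x, |a x| ≤ C)
    (hb : Measurable b) (hb_bdd : ∃ C, ∀ x, |b x| ≤ C) :
    P[fun ω => a (q (Z ω) (X ω) (η ω)) * b (ε ω) |
        MeasurableSpace.comap (fun ω => (X ω, V ω)) inferInstance]
      =ᵐ[P] fun ω =>
        (P[fun ω' => a (q (Z ω') (X ω') (η ω')) |
            MeasurableSpace.comap (fun ω => (X ω, V ω)) inferInstance]) ω *
        (P[fun ω' => b (ε ω') | MeasurableSpace.comap (fun ω => (X ω, V ω)) inferInstance]) ω := by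
  obtain ⟨Ca, hCa⟩ := ha_bdd
  obtain ⟨Cb, hCb⟩ := hb_bdd
  have hT : Measurable fun ω => (X ω, V ω) := hX.prodMk hV
  set ψ : γ × ℝ → ℝ := fun w => ∫ z, a (q z w.1 (Q w.2)) ∂(condDistrib Z X P).prodMkRight ℝ w
  have hψ : StronglyMeasurable ψ :=
    StronglyMeasurable.integral_kernel_prod_right'
      (f := fun p : (γ × ℝ) × β => a (q p.2 p.1.1 (Q p.1.2)))
      (ha.comp (hq.comp (measurable_snd.prodMk (measurable_fst.fst.prodMk
        (hQ.comp measurable_fst.snd))))).stronglyMeasurable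
  have hψ_le w : ‖ψ w‖ ≤ Ca := by
    simpa [ψ] using norm_integral_le_of_norm_le_const (f := fun z => a (q z w.1 (Q w.2)))
      (μ := (condDistrib Z X P).prodMkRight ℝ w) (ae_of_all _ fun z => hCa _)
  have haD : Integrable (fun ω => a (q (Z ω) (X ω) (η ω))) P :=
    .of_bound (ha.comp (hq.comp (hZ.prodMk (hX.prodMk hη)))).aestronglyMeasurable Ca
      (ae_of_all _ fun ω => hCa _)
  have hbε : Integrable (fun ω => b (ε ω)) P :=
    .of_bound (hb.comp hε).aestronglyMeasurable Cb (ae_of_all _ fun ω => hCb _)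
  have hu : Integrable (fun ω => ψ (X ω, V ω)) P :=
    .of_bound (hψ.measurable.comp hT).aestronglyMeasurable Ca (ae_of_all _ fun ω => hψ_le _)
  refine condExp_mul_ae_eq_mul_of_setIntegral_eq hT.comap_le
    (hψ.measurable.comp (comap_measurable _)).stronglyMeasurable haD hbε hu
    (haD.mul_bdd hbε.aestronglyMeasurable (ae_of_all _ fun ω => hCb _))
    (hu.mul_bdd hbε.aestronglyMeasurable (ae_of_all _ fun ω => hCb _)) ?_ ?_
  · rintro _ ⟨B, hB, rfl⟩
    simpa [ψ] using setIntegral_comp_mul_eq_setIntegral_integral_condDistrib_mul hZ hX hε hη hZY hq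
      hF hVF hQV ha ⟨Ca, hCa⟩ (measurable_const (a := (1 : ℝ))) ⟨1, fun _ => by simp⟩ hB
  · rintro _ ⟨B, hB, rfl⟩
    exact setIntegral_comp_mul_eq_setIntegral_integral_condDistrib_mul hZ hX hε hη hZY hq
      hF hVF hQV ha ⟨Ca, hCa⟩ hb ⟨Cb, hCb⟩ hB

end ControlFunction

theorem triangular_control_variable_condIndep_general
    {Ω : Type*} {mΩ : MeasurableSpace Ω} (P : Measure Ω) [IsProbabilityMeasure P]
    {m k : ℕ}
    (Z : Ω → (Fin m → ℝ)) (X : Ω → (Fin k → ℝ)) (ε η : Ω → ℝ)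
    (hZ : Measurable Z) (hX : Measurable X) (hε : Measurable ε) (hη : Measurable η)
    (q : (Fin m → ℝ) → (Fin k → ℝ) → ℝ → ℝ)
    (hq : Measurable fun p : (Fin m → ℝ) × (Fin k → ℝ) × ℝ => q p.1 p.2.1 p.2.2)
    (hqmono : ∀ z x, StrictMono (q z x))
    (D : Ω → ℝ) (hD : ∀ ω, D ω = q (Z ω) (X ω) (η ω))
    (Fη : ℝ → ℝ) (hFη : ∀ e, Fη e = (P.map η (Set.Iic e)).toReal)
    (hFηmono : StrictMonoOn Fη (measureSupport (P.map η)))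
    (hindep : IndepFun η (fun ω => (Z ω, X ω)) P)
    -- instrument exogeneity: `Z ⫫ (ε,η) | X`
    (hexog : ∀ (f : (Fin m → ℝ) → ℝ) (g : ℝ × ℝ → ℝ), Measurable f → Measurable g →
      (∃ C, ∀ x, |f x| ≤ C) → (∃ C, ∀ x, |g x| ≤ C) →
      P[fun ω => f (Z ω) * g (ε ω, η ω) | MeasurableSpace.comap X inferInstance]
        =ᵐ[P] fun ω => (P[fun ω' => f (Z ω') | MeasurableSpace.comap X inferInstance]) ω *
          (P[fun ω' => g (ε ω', η ω') | MeasurableSpace.comap X inferInstance]) ω)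
    -- the control variable `V = F_{D|Z,X}(D)`
    (V : Ω → ℝ)
    (hV : ∀ ω, V ω
      = (condDistrib D (fun ω' => (Z ω', X ω')) P (Z ω, X ω) (Set.Iic (D ω))).toReal) :
    ((fun ω => V ω) =ᵐ[P] fun ω => Fη (η ω)) ∧
    (∀ (a b : ℝ → ℝ), Measurable a → Measurable b →
      (∃ C, ∀ x, |a x| ≤ C) → (∃ C, ∀ x, |b x| ≤ C) →
      P[fun ω => a (D ω) * b (ε ω) |
          MeasurableSpace.comap (fun ω => (X ω, V ω)) inferInstance]
        =ᵐ[P] fun ω =>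
          (P[fun ω' => a (D ω') |
              MeasurableSpace.comap (fun ω => (X ω, V ω)) inferInstance]) ω *
          (P[fun ω' => b (ε ω') |
              MeasurableSpace.comap (fun ω => (X ω, V ω)) inferInstance]) ω) := by
  obtain rfl : D = fun ω => q (Z ω) (X ω) (η ω) := funext hD
  have hW : Measurable fun ω => (Z ω, X ω) := hZ.prodMk hX
  have hVη : ∀ᵐ ω ∂P, V ω = Fη (η ω) := by
    filter_upwards [condDistrib_Iic_ae_eq_of_indepFun_of_strictMono hW hη hindep.symm
      (f := fun w e => q w.1 w.2 e)
      (hq.comp (measurable_fst.fst.prodMk (measurable_fst.snd.prodMk measurable_snd)))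
      fun w => hqmono w.1 w.2] with ω hω
    rw [hV, hFη, ← hω]
  have hV_meas : Measurable V := by
    rw [funext hV]
    exact ((Kernel.measurable_apply_Iic _).comp
      (hW.prodMk (hq.comp (hZ.prodMk (hX.prodMk hη))))).ennreal_toReal
  have hFη_meas : Measurable Fη := by
    have := Measure.isProbabilityMeasure_map (μ := P) hη.aemeasurable
    rw [show Fη = cdf (P.map η) from funext fun e => by rw [hFη, cdf_eq_real]; rfl]
    exact (monotone_cdf _).measurable
  rw [measureSupport_eq_support] at hFηmono
  obtain ⟨Q, hQ, hQF⟩ :=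
    Measure.isClosed_support.measurableSet.exists_measurable_leftInvOn hFη_meas hFηmono.injOn
  have hQV : ∀ᵐ ω ∂P, Q (V ω) = η ω := by
    filter_upwards [hVη, ae_of_ae_map hη.aemeasurable Measure.support_mem_ae] with ω hVω hηω
    rw [hVω, hQF hηω]
  exact ⟨hVη, fun a b ha hb ha_bdd hb_bdd => condExp_mul_ae_eq_mul_given_control hZ hX hε hη
    hexog hq hV_meas hFη_meas hQ hVη hQV ha ha_bdd hb hb_bdd⟩

/-- **Theorem 2 (combined).** In the nonseparable triangular model `D = q(Z,X,η)` with
`e ↦ q(z,x,e)` strictly increasing and continuous, `η` continuously distributed with CDF `Fη`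
continuous and strictly increasing on its support, `η ⫫ (Z,X)`, and `Z ⫫ (ε,η) | X`, the
constructed control variable `V := F_{D|Z,X}(D)` satisfies `V = Fη(η)` `P`-a.s. and `D` is
conditionally independent of `ε` given `(X,V)`. -/
theorem triangular_control_variable_condIndep
    {Ω : Type*} {mΩ : MeasurableSpace Ω} (P : Measure Ω) [IsProbabilityMeasure P]
    {m k : ℕ}
    (Z : Ω → (Fin m → ℝ)) (X : Ω → (Fin k → ℝ)) (ε η : Ω → ℝ)
    (hZ : Measurable Z) (hX : Measurable X) (hε : Measurable ε) (hη : Measurable η)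
    (q : (Fin m → ℝ) → (Fin k → ℝ) → ℝ → ℝ)
    (hq : Measurable fun p : (Fin m → ℝ) × (Fin k → ℝ) × ℝ => q p.1 p.2.1 p.2.2)
    (hqcont : ∀ z x, Continuous (q z x)) (hqmono : ∀ z x, StrictMono (q z x))
    (D : Ω → ℝ) (hD : ∀ ω, D ω = q (Z ω) (X ω) (η ω))
    (hηcont : P.map η ≪ MeasureTheory.volume)
    (Fη : ℝ → ℝ) (hFη : ∀ e, Fη e = (P.map η (Set.Iic e)).toReal)
    (hFηcont : Continuous Fη)
    (hFηmono : StrictMonoOn Fη (measureSupport (P.map η)))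
    (hindep : IndepFun η (fun ω => (Z ω, X ω)) P)
    -- instrument exogeneity: `Z ⫫ (ε,η) | X`
    (hexog : ∀ (f : (Fin m → ℝ) → ℝ) (g : ℝ × ℝ → ℝ), Measurable f → Measurable g →
      (∃ C, ∀ x, |f x| ≤ C) → (∃ C, ∀ x, |g x| ≤ C) →
      P[fun ω => f (Z ω) * g (ε ω, η ω) | MeasurableSpace.comap X inferInstance]
        =ᵐ[P] fun ω => (P[fun ω' => f (Z ω') | MeasurableSpace.comap X inferInstance]) ω *
          (P[fun ω' => g (ε ω', η ω') | MeasurableSpace.comap X inferInstance]) ω)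
    -- the control variable `V = F_{D|Z,X}(D)`
    (V : Ω → ℝ)
    (hV : ∀ ω, V ω
      = (condDistrib D (fun ω' => (Z ω', X ω')) P (Z ω, X ω) (Set.Iic (D ω))).toReal) :
    ((fun ω => V ω) =ᵐ[P] fun ω => Fη (η ω)) ∧
    (∀ (a b : ℝ → ℝ), Measurable a → Measurable b →
      (∃ C, ∀ x, |a x| ≤ C) → (∃ C, ∀ x, |b x| ≤ C) →
      P[fun ω => a (D ω) * b (ε ω) |
          MeasurableSpace.comap (fun ω => (X ω, V ω)) inferInstance]
        =ᵐ[P] fun ω =>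
          (P[fun ω' => a (D ω') |
              MeasurableSpace.comap (fun ω => (X ω, V ω)) inferInstance]) ω *
          (P[fun ω' => b (ε ω') |
              MeasurableSpace.comap (fun ω => (X ω, V ω)) inferInstance]) ω) :=
  triangular_control_variable_condIndep_general (mΩ := mΩ) P Z X ε η hZ hX hε hη q hq hqmono D hD Fη
    hFη hFηmono hindep hexog V hV
end
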